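/- arXiv:2205.12185 — 2 statements merged into one kernel-verified Lean document; each statement's English description precedes it below -/
import Mathlib

section
/- Suppose 0 < v_T < 1/2, V_u > v_T, g > 0, k ≥ 0, and let G(v) = g(k+1)v - g V_u. If G(v) < F(v) for all v in the critical segment [v_min, v_i] and g(k+1) < F'(v_i), then the equation F(v) = G(v) has no solution in [0, v_i]; in particular the resting equilibrium has disappeared. -/
/-- If the line G(v) = g(k+1)v - g V_u lies strictly below F on the
critical segment [v_min, v_i] and has slope g(k+1) < F'(v_i), then F(v) = G(v)
has no solution in [0, v_i]: the resting equilibrium has disappeared. -/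
theorem no_rest_equilibrium (vT : ℝ) (hvT0 : 0 < vT) (hvT1 : vT < 1 / 2)
    (F : ℝ → ℝ) (hF : ∀ v, F v = v * (v - vT) * (1 - v))
    (Vu g k : ℝ) (hVu : vT < Vu) (hg : 0 < g) (hk : 0 ≤ k)
    (vi : ℝ) (hvi : vi = (vT + 1) / 3)
    (vmin : ℝ) (hvmin_crit : deriv F vmin = 0) (hvmin_min : IsLocalMin F vmin)
    (hvmin_lt : vmin < vi)
    (G : ℝ → ℝ) (hG : ∀ v, G v = g * (k + 1) * v - g * Vu)
    (hbelow : ∀ v ∈ Set.Icc vmin vi, G v < F v)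
    (hslope : g * (k + 1) < deriv F vi) :
    ∀ v ∈ Set.Icc (0 : ℝ) vi, F v ≠ G v := by
  have hFfun : F = fun v => v * (v - vT) * (1 - v) := funext hF
  have hder : ∀ x : ℝ, HasDerivAt F (-(3 * x ^ 2) + 2 * (1 + vT) * x - vT) x := by
    intro x
    have h1 : HasDerivAt (fun v : ℝ => v * (v - vT) * (1 - v))
        ((1 * (x - vT) + x * 1) * (1 - x) + x * (x - vT) * (0 - 1)) x := by
      exact (((hasDerivAt_id x).mul ((hasDerivAt_id x).sub_const vT)).mul
        ((hasDerivAt_const x (1:ℝ)).sub (hasDerivAt_id x)))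
    rw [hFfun]
    convert h1 using 1
    ring
  have hderiv : ∀ x : ℝ, deriv F x = -(3 * x ^ 2) + 2 * (1 + vT) * x - vT :=
    fun x => (hder x).deriv
  have hcrit : -(3 * vmin ^ 2) + 2 * (1 + vT) * vmin - vT = 0 := by
    rw [← hderiv]; exact hvmin_crit
  -- F' v = 3 * (vmin - v) * (v + vmin - 2*vi)
  have hfact : ∀ v : ℝ, deriv F v = 3 * (vmin - v) * (v + vmin - 2 * vi) := by
    intro v
    rw [hderiv]
    have h2 : vT = 2 * (1 + vT) * vmin - 3 * vmin ^ 2 := by linarith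
    rw [hvi]
    nlinarith [h2]
  have hanti : StrictAntiOn F (Set.Icc 0 vmin) := by
    apply strictAntiOn_of_deriv_neg (convex_Icc 0 vmin)
    · rw [hFfun]; exact (Continuous.continuousOn (by continuity))
    · intro x hx
      rw [interior_Icc] at hx
      rw [hfact x]
      have h1 : 0 < vmin - x := by linarith [hx.2]
      have h2 : x + vmin - 2 * vi < 0 := by linarith [hx.1, hx.2, hvmin_lt]
      nlinarith
  intro v hv hEq
  rcases le_or_gt vmin v with h | h
  · exact absurd hEq.symm (ne_of_lt (hbelow v ⟨h, hv.2⟩))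
  · -- v < vmin, so 0 ≤ v < vmin ≤ vi (vmin > v ≥ 0)
    have hv0 : (0:ℝ) ≤ v := hv.1
    have hFv : F vmin < F v := hanti ⟨hv0, le_of_lt h⟩ ⟨by linarith, le_refl _⟩ h
    have hGv : G v ≤ G vmin := by
      rw [hG, hG]
      have : 0 ≤ g * (k + 1) := by positivity
      nlinarith
    have hFG : G vmin < F vmin := hbelow vmin ⟨le_refl _, le_of_lt hvmin_lt⟩
    linarith [hEq ▸ hFv]
end

section
/- With α = α_- ∈ (0,1) the smaller root of kα² − (k+β)α + 1 = 0, β = 1 + g_L/g, the inequality k(1 − α) < k_0 is equivalent to k < k_0(1 + 1/(k_0 + g_L/g)), for any k_0 > 0 and g, g_L, k > 0. -/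
/-- With α = α_- the smaller root of kα² - (k+β)α + 1 = 0,
β = 1 + g_L/g, the inequality k(1 - α) < k₀ is equivalent to
k < k₀(1 + 1/(k₀ + g_L/g)), for any k₀ > 0 and g, g_L, k > 0. -/
theorem downstream_adjustment (g gL k k0 : ℝ) (hg : 0 < g) (hgL : 0 < gL)
    (hk : 0 < k) (hk0 : 0 < k0)
    (β : ℝ) (hβ : β = 1 + gL / g)
    (α : ℝ) (hα : α = (k + β - Real.sqrt ((k + β) ^ 2 - 4 * k)) / (2 * k)) :
    k * (1 - α) < k0 ↔ k < k0 * (1 + 1 / (k0 + gL / g)) := by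
  have ht0 : 0 < gL / g := div_pos hgL hg
  set t := gL / g with ht
  subst hβ
  have hD : 0 < (k + (1 + t)) ^ 2 - 4 * k := by nlinarith [sq_nonneg (k - (1 + t))]
  set s := Real.sqrt ((k + (1 + t)) ^ 2 - 4 * k) with hs
  have hs0 : 0 < s := Real.sqrt_pos.mpr hD
  have hs2 : s ^ 2 = (k + (1 + t)) ^ 2 - 4 * k := Real.sq_sqrt hD.le
  have hkα : k * (1 - α) = (k - (1 + t) + s) / 2 := by
    rw [hα]; field_simp; ring
  have hst : 0 < k0 + t := by linarith
  have hrhs : k0 * (1 + 1 / (k0 + t)) = k0 * (k0 + t + 1) / (k0 + t) := by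
    field_simp
  rw [hkα, hrhs, lt_div_iff₀ hst]
  constructor
  · intro h
    have h1 : s < 2 * k0 + (1 + t) - k := by linarith
    have h2 : (k + (1 + t)) ^ 2 - 4 * k < (2 * k0 + (1 + t) - k) ^ 2 := by
      rw [← hs2]; nlinarith
    nlinarith
  · intro h
    have hc : 0 < 2 * k0 + (1 + t) - k := by nlinarith
    have h2 : s < 2 * k0 + (1 + t) - k := by
      rw [hs, Real.sqrt_lt' hc]; nlinarith
    linarith
end
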